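/- arXiv:0802.1109 — 8 statements merged into one kernel-verified Lean document; each statement's English description precedes it below -/
import Mathlib

section
/- Let {P_s : s ∈ Γ} be a projectional skeleton in a Banach space X. Then there exists a closed cofinal subset Γ' ⊆ Γ such that sup{‖P_s‖ : s ∈ Γ'} < +∞. -/
/-- A projectional skeleton in a Banach space `X`: a family of bounded projections
`P s`, indexed by an up-directed partial order `Γ`, such that `X = ⋃ₛ im (P s)`,
each image is separable, `P s = P s ∘ P t = P t ∘ P s` for `s ≤ t`, and every
increasing sequence has a supremum `t` with `im (P t) = closure (⋃ₙ im (P sₙ))`. -/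
structure ProjSkeleton (X : Type*) [NormedAddCommGroup X] [NormedSpace ℝ X]
    (Γ : Type*) [PartialOrder Γ] where
  P : Γ → X →L[ℝ] X
  directed : ∀ s t : Γ, ∃ u, s ≤ u ∧ t ≤ u
  idem : ∀ s, (P s).comp (P s) = P s
  covers : ∀ x : X, ∃ s, P s x = x
  sep : ∀ s, TopologicalSpace.IsSeparable (Set.range (P s))
  comp_of_le : ∀ s t, s ≤ t → (P s).comp (P t) = P s ∧ (P t).comp (P s) = P s
  lub_exists : ∀ u : ℕ → Γ, StrictMono u → ∃ t, IsLUB (Set.range u) t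
  range_lub : ∀ u : ℕ → Γ, StrictMono u → ∀ t, IsLUB (Set.range u) t →
    Set.range (P t) = closure (⋃ n, Set.range (P (u n)))

/-!
If no bound `C` were attained cofinally, each `C` would have a threshold `s_C` above which all
norms exceed `C`; climbing past the thresholds `s_{max(n, ‖P vₙ‖)}` produces a strictly
increasing sequence `vₙ` whose supremum has norm exceeding every `n`. So some `C` bounds `‖P s‖`
on a cofinal set, which is closed: for `t = sup uₙ` and `y = P t x`, every `z` in the range of
some `P uₘ` satisfies the closed condition `‖z‖ ≤ C ‖x‖ + C ‖z - y‖`, and `y` lies in the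
closure of these ranges.
-/
theorem exists_isCofinal_le_of_bddAbove {Γ : Type*} [PartialOrder Γ] [IsDirectedOrder Γ]
    (hbdd : ∀ u : ℕ → Γ, StrictMono u → BddAbove (Set.range u)) (f : Γ → ℝ) :
    ∃ C : ℝ, IsCofinal {s | f s ≤ C} := by
  by_contra! hcofinal
  have hlarge (C : ℝ) : ∃ s, ∀ t, s ≤ t → C < f t := by
    obtain ⟨s, hs⟩ := not_forall.1 (hcofinal C)
    exact ⟨s, fun t hst => not_le.1 fun hft => hs ⟨t, hft, hst⟩⟩
  choose threshold hthreshold using hlarge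
  choose ub hub_left hub_right using fun a b : Γ => exists_ge_ge a b
  let v : ℕ → Γ := fun n =>
    Nat.rec (threshold 0) (fun n vn => ub vn (threshold (max (n : ℝ) (f vn)))) n
  have hv_large : ∀ n : ℕ, max (n : ℝ) (f (v n)) < f (v (n + 1)) :=
    fun n => hthreshold _ _ (hub_right _ _)
  have hv : StrictMono v := by
    refine strictMono_nat_of_lt_succ fun n =>
      (hub_left _ _).lt_of_ne fun heq : v n = v (n + 1) => ?_
    have := hv_large n
    rw [← heq] at this
    exact (le_max_right _ _).not_gt this
  obtain ⟨t, ht⟩ := hbdd v hv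
  obtain ⟨n, hn⟩ := exists_nat_gt (f t)
  have := hthreshold _ t ((hub_right _ _).trans (ht ⟨n + 1, rfl⟩))
  linarith [le_max_left (n : ℝ) (f (v n))]

namespace ProjSkeleton

variable {X : Type*} [NormedAddCommGroup X] [NormedSpace ℝ X] {Γ : Type*} [PartialOrder Γ]
  (S : ProjSkeleton X Γ)

theorem apply_apply_of_le {s t : Γ} (hst : s ≤ t) (x : X) : S.P s (S.P t x) = S.P s x :=
  DFunLike.congr_fun (S.comp_of_le s t hst).1 x

theorem apply_self (s : Γ) (x : X) : S.P s (S.P s x) = S.P s x :=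
  DFunLike.congr_fun (S.idem s) x

theorem norm_le_of_isLUB {C : ℝ} {u : ℕ → Γ} (hu : StrictMono u) (hC : ∀ n, ‖S.P (u n)‖ ≤ C)
    {t : Γ} (ht : IsLUB (Set.range u) t) : ‖S.P t‖ ≤ C := by
  have hC0 : 0 ≤ C := (norm_nonneg _).trans (hC 0)
  refine ContinuousLinearMap.opNorm_le_bound _ hC0 fun x => ?_
  set y := S.P t x
  have hy : y ∈ closure (⋃ n, Set.range (S.P (u n))) := S.range_lub u hu t ht ▸ ⟨x, rfl⟩
  have hclosed : IsClosed {z : X | ‖z‖ ≤ C * ‖x‖ + C * ‖z - y‖} :=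
    isClosed_le (by fun_prop) (by fun_prop)
  -- Every `z = P (u m) w` satisfies the closed condition, because `P (u m) y = P (u m) x`.
  have hsub : ⋃ n, Set.range (S.P (u n)) ⊆ {z : X | ‖z‖ ≤ C * ‖x‖ + C * ‖z - y‖} := by
    rintro _ ⟨_, ⟨m, rfl⟩, w, rfl⟩
    set z := S.P (u m) w
    have hz : z = S.P (u m) x + S.P (u m) (z - y) := by
      rw [map_sub, S.apply_self, S.apply_apply_of_le (ht.1 ⟨m, rfl⟩), add_sub_cancel]
    calc ‖z‖ = ‖S.P (u m) x + S.P (u m) (z - y)‖ := by rw [← hz]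
      _ ≤ ‖S.P (u m) x‖ + ‖S.P (u m) (z - y)‖ := norm_add_le _ _
      _ ≤ C * ‖x‖ + C * ‖z - y‖ := by
        gcongr <;> exact (ContinuousLinearMap.le_opNorm _ _).trans (by gcongr; exact hC m)
  simpa using hclosed.closure_subset_iff.2 hsub hy

end ProjSkeleton

theorem statement2_general {X : Type*} [NormedAddCommGroup X] [NormedSpace ℝ X]
    {Γ : Type*} [PartialOrder Γ] (S : ProjSkeleton X Γ) :
    ∃ Γ' : Set Γ,
      (∀ u : ℕ → Γ, StrictMono u → (∀ n, u n ∈ Γ') →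
        ∀ t, IsLUB (Set.range u) t → t ∈ Γ') ∧
      (∀ s : Γ, ∃ t ∈ Γ', s ≤ t) ∧
      ∃ C : ℝ, ∀ s ∈ Γ', ‖S.P s‖ ≤ C := by
  have : IsDirectedOrder Γ := ⟨S.directed⟩
  obtain ⟨C, hC⟩ := exists_isCofinal_le_of_bddAbove
    (fun u hu => (S.lub_exists u hu).imp fun _ ht => ht.1) fun s => ‖S.P s‖
  exact ⟨{s | ‖S.P s‖ ≤ C}, fun u hu hCu t ht => S.norm_le_of_isLUB hu hCu ht, hC, C,
    fun _ hs => hs⟩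

/-- every projectional skeleton admits a closed cofinal subset on
which the projections are uniformly bounded. -/
theorem statement2 {X : Type*} [NormedAddCommGroup X] [NormedSpace ℝ X] [CompleteSpace X]
    {Γ : Type*} [PartialOrder Γ] (S : ProjSkeleton X Γ) :
    ∃ Γ' : Set Γ,
      (∀ u : ℕ → Γ, StrictMono u → (∀ n, u n ∈ Γ') →
        ∀ t, IsLUB (Set.range u) t → t ∈ Γ') ∧
      (∀ s : Γ, ∃ t ∈ Γ', s ≤ t) ∧
      ∃ C : ℝ, ∀ s ∈ Γ', ‖S.P s‖ ≤ C :=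
  statement2_general S
end

section
/- Let X be a Banach space with a 1-projectional skeleton {P_s : s ∈ Γ} (each ‖P_s‖ = 1). Suppose {T_α : α < κ} is an increasing continuous chain of up-directed subsets of Γ (continuity: T_δ = ⋃_{ξ<δ} T_ξ for limit δ) with |T_α| ≤ |α| + ℵ₀, such that ⋃{P_s X : s ∈ T_α, α < κ} is dense in X, and such that for each α the net limit P_α x := lim_{s∈T_α} P_s x exists for all x. Then {P_α : α < κ} is a projectional resolution of the identity on X: each P_α is a norm-one projection onto X_α = closure(⋃_{s∈T_α} P_s X), dens(P_α X) ≤ |α| + ℵ₀, P_α = P_α ∘ P_β = P_β ∘ P_α for α < β, X_δ = closure(⋃_{ξ<δ} X_ξ) for limit δ, and X = closure(⋃_{α<κ} X_α). -/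
/-! Each `Q α` is the strong limit of the contractions `P s` along the directed set `T α`; a
pointwise limit of uniformly bounded operators is again a bounded operator. The net is eventually
constant on every `P s X` with `s ∈ T α`, so `Q α` fixes the closure `X_α` of their union, while its
range lies in `X_α`: it is a norm-one projection onto `X_α`. For `α < β` and `s ∈ T α ⊆ T β`,
compatibility gives `P s ∘ Q β = P s`, and letting `s` run through `T α` yields `Q α ∘ Q β = Q α`;
`Q β ∘ Q α = Q α` because `X_α ⊆ X_β`. The remaining properties are read off from the description
of `X_α` as a closed union of separable spaces indexed by `T α`. -/

open Filter Topology Set Cardinal TopologicalSpace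

universe u

theorem IsIdempotentElem.one_le_norm {R : Type*} [NonUnitalNormedRing R] {p : R}
    (hp : IsIdempotentElem p) (h0 : p ≠ 0) : 1 ≤ ‖p‖ := by
  have hpp := norm_mul_le p p
  rw [hp.eq] at hpp
  exact (le_mul_iff_one_le_left (norm_pos_iff.2 h0)).1 hpp

theorem exists_subset_biUnion_mk_le_closure {X ι : Type u} [TopologicalSpace X]
    [PseudoMetrizableSpace X] {S : Set ι} {f : ι → Set X} (hf : ∀ i ∈ S, IsSeparable (f i)) :
    ∃ A ⊆ ⋃ i ∈ S, f i, #A ≤ #S * ℵ₀ ∧ ⋃ i ∈ S, f i ⊆ closure A := by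
  choose D hDf hDc hDd using fun i : S => (hf i i.2).exists_countable_dense_subset
  refine ⟨⋃ i, D i, iUnion_subset fun i => (hDf i).trans (subset_biUnion_of_mem i.2), ?_,
    iUnion₂_subset fun i hi => (hDd ⟨i, hi⟩).trans (closure_mono (subset_iUnion D ⟨i, hi⟩))⟩
  exact (mk_iUnion_le D).trans (mul_le_mul_right (ciSup_le' fun i => (hDc i).le_aleph0) _)

section NetLimit

variable {X Γ : Type*} [NormedAddCommGroup X] [Preorder Γ]

theorem tendsto_atTop_subtype_of_forall_norm_sub_lt {S : Set Γ} {f : Γ → X} {y : X}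
    (h : ∀ ε > (0 : ℝ), ∃ t ∈ S, ∀ s ∈ S, t ≤ s → ‖f s - y‖ < ε) :
    Tendsto (fun s : S => f s) atTop (𝓝 y) :=
  Metric.tendsto_nhds.2 fun ε hε =>
    let ⟨t, ht, hty⟩ := h ε hε
    mem_of_superset (mem_atTop (⟨t, ht⟩ : S)) fun s hts => by
      simpa [dist_eq_norm] using hty s s.2 hts

variable [NormedSpace ℝ X]

/-- `Q` is the strong-operator limit of the net `(P s)_{s ∈ S}`, the net being encoded by the
`atTop` filter on the subtype `S`. -/
structure IsStrongNetLimit (P : Γ → X →L[ℝ] X) (S : Set Γ) (Q : X →L[ℝ] X) : Prop where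
  nonempty : S.Nonempty
  directedOn : DirectedOn (· ≤ ·) S
  tendsto : ∀ x, Tendsto (fun s : S => P s x) atTop (𝓝 (Q x))

theorem exists_isStrongNetLimit {P : Γ → X →L[ℝ] X} {S : Set Γ} {C : ℝ}
    (hS : DirectedOn (· ≤ ·) S) (hP : ∀ s ∈ S, ‖P s‖ ≤ C)
    (hlim : ∀ x, ∃ y, ∀ ε > (0 : ℝ), ∃ t ∈ S, ∀ s ∈ S, t ≤ s → ‖P s x - y‖ < ε) :
    ∃ Q, IsStrongNetLimit P S Q := by
  have hne : S.Nonempty :=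
    let ⟨_, hy⟩ := hlim 0
    let ⟨t, ht, _⟩ := hy 1 one_pos
    ⟨t, ht⟩
  have := hS.isDirectedOrder
  have := hne.to_subtype
  choose f hf using fun x => (hlim x).imp fun _ => tendsto_atTop_subtype_of_forall_norm_sub_lt
  have hbdd : Bornology.IsBounded (range fun s : S => P s) :=
    isBounded_iff_forall_norm_le.2 ⟨C, by rintro _ ⟨s, rfl⟩; exact hP s s.2⟩
  exact ⟨.ofTendstoOfBoundedRange f _ (tendsto_pi_nhds.2 hf) hbdd, hne, hS, hf⟩

namespace IsStrongNetLimit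

variable {P : Γ → X →L[ℝ] X} {S S' : Set Γ} {Q Q' : X →L[ℝ] X}

theorem atTop_neBot (h : IsStrongNetLimit P S Q) : (atTop : Filter S).NeBot := by
  have := h.directedOn.isDirectedOrder
  have := h.nonempty.to_subtype
  infer_instance

theorem forall_norm_sub_lt (h : IsStrongNetLimit P S Q) (x : X) :
    ∀ ε > (0 : ℝ), ∃ t ∈ S, ∀ s ∈ S, t ≤ s → ‖P s x - Q x‖ < ε := by
  have := h.directedOn.isDirectedOrder
  have := h.nonempty.to_subtype
  intro ε hε
  obtain ⟨⟨t, ht⟩, -, hty⟩ :=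
    (atTop_basis.tendsto_iff Metric.nhds_basis_ball).1 (h.tendsto x) ε hε
  exact ⟨t, ht, fun s hs hts => by simpa [dist_eq_norm] using hty ⟨s, hs⟩ hts⟩

theorem opNorm_le (h : IsStrongNetLimit P S Q) {C : ℝ} (hC : 0 ≤ C)
    (hP : ∀ s ∈ S, ‖P s‖ ≤ C) : ‖Q‖ ≤ C := by
  have := h.atTop_neBot
  exact Q.opNorm_le_bound hC fun x => le_of_tendsto (h.tendsto x).norm
    (Eventually.of_forall fun s => (P s).le_of_opNorm_le (hP s s.2) x)

theorem apply_eq_self (h : IsStrongNetLimit P S Q)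
    (hP : ∀ s t, s ≤ t → (P t).comp (P s) = P s) {x : X}
    (hx : x ∈ closure (⋃ s ∈ S, range (P s))) : Q x = x := by
  have := h.atTop_neBot
  refine closure_minimal (fun y hy => ?_) (isClosed_eq Q.continuous continuous_id) hx
  obtain ⟨s, hs, z, rfl⟩ := mem_iUnion₂.1 hy
  have hev : ∀ᶠ t : S in atTop, P t (P s z) = P s z :=
    (eventually_ge_atTop ⟨s, hs⟩).mono fun t hst => DFunLike.congr_fun (hP s t hst) z
  exact tendsto_nhds_unique_of_eventuallyEq (h.tendsto _) tendsto_const_nhds hev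

theorem range_eq (h : IsStrongNetLimit P S Q) (hP : ∀ s t, s ≤ t → (P t).comp (P s) = P s) :
    range Q = closure (⋃ s ∈ S, range (P s)) := by
  have := h.atTop_neBot
  refine Subset.antisymm ?_ fun x hx => ⟨x, h.apply_eq_self hP hx⟩
  rintro _ ⟨x, rfl⟩
  exact mem_closure_of_tendsto (h.tendsto x)
    (Eventually.of_forall fun s => mem_iUnion₂_of_mem s.2 (mem_range_self x))

theorem range_subset_of_mem (h : IsStrongNetLimit P S Q)
    (hP : ∀ s t, s ≤ t → (P t).comp (P s) = P s) {s : Γ} (hs : s ∈ S) :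
    range (P s) ⊆ range Q :=
  h.range_eq hP ▸ (subset_biUnion_of_mem (u := fun s => range (P s)) hs).trans subset_closure

theorem range_subset_of_subset (h : IsStrongNetLimit P S Q) (h' : IsStrongNetLimit P S' Q')
    (hSS' : S ⊆ S') (hP : ∀ s t, s ≤ t → (P t).comp (P s) = P s) : range Q ⊆ range Q' := by
  rw [h.range_eq hP, h'.range_eq hP]
  exact closure_mono (biUnion_subset_biUnion_left hSS')

theorem isIdempotentElem (h : IsStrongNetLimit P S Q)
    (hP : ∀ s t, s ≤ t → (P t).comp (P s) = P s) : IsIdempotentElem Q :=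
  ContinuousLinearMap.ext fun x => h.apply_eq_self hP (h.range_eq hP ▸ mem_range_self x)

theorem norm_eq_one (h : IsStrongNetLimit P S Q) (hP : ∀ s t, s ≤ t → (P t).comp (P s) = P s)
    (hnorm : ∀ s ∈ S, ‖P s‖ = 1) : ‖Q‖ = 1 := by
  obtain ⟨s, hs⟩ := h.nonempty
  have hQ0 : Q ≠ 0 := by
    intro hQ
    have hQP : Q.comp (P s) = P s :=
      ContinuousLinearMap.ext fun z =>
        h.apply_eq_self hP (subset_closure (mem_iUnion₂_of_mem hs (mem_range_self z)))
    rw [hQ, ContinuousLinearMap.zero_comp] at hQP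
    simpa [← hQP] using hnorm s hs
  exact le_antisymm (h.opNorm_le zero_le_one fun s hs => (hnorm s hs).le)
    ((h.isIdempotentElem hP).one_le_norm hQ0)

theorem comp_eq_of_mem (h : IsStrongNetLimit P S Q)
    (hP : ∀ s t, s ≤ t → (P s).comp (P t) = P s) {s : Γ} (hs : s ∈ S) : (P s).comp Q = P s := by
  have := h.atTop_neBot
  ext x
  have hev : ∀ᶠ t : S in atTop, P s (P t x) = P s x :=
    (eventually_ge_atTop ⟨s, hs⟩).mono fun t hst => DFunLike.congr_fun (hP s t hst) x
  exact tendsto_nhds_unique_of_eventuallyEq (((P s).continuous.tendsto _).comp (h.tendsto x))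
    tendsto_const_nhds hev

theorem comp_eq_of_subset (h : IsStrongNetLimit P S Q) (h' : IsStrongNetLimit P S' Q')
    (hSS' : S ⊆ S') (hPl : ∀ s t, s ≤ t → (P s).comp (P t) = P s)
    (hPr : ∀ s t, s ≤ t → (P t).comp (P s) = P s) : Q.comp Q' = Q ∧ Q'.comp Q = Q := by
  have := h.atTop_neBot
  refine ⟨ContinuousLinearMap.ext fun x => ?_, ContinuousLinearMap.ext fun x => ?_⟩
  · have hPQ' : (fun s : S => P s (Q' x)) = fun s : S => P s x :=
      funext fun s => DFunLike.congr_fun (h'.comp_eq_of_mem hPl (hSS' s.2)) x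
    refine tendsto_nhds_unique (h.tendsto (Q' x)) ?_
    rw [hPQ']
    exact h.tendsto x
  · exact h'.apply_eq_self hPr
      (h'.range_eq hPr ▸ h.range_subset_of_subset h' hSS' hPr (mem_range_self x))

theorem range_eq_closure_iUnion {ι : Type*} {p : ι → Prop} {S' : ι → Set Γ}
    {Q' : ι → X →L[ℝ] X} (h : IsStrongNetLimit P S Q)
    (h' : ∀ i, p i → IsStrongNetLimit P (S' i) (Q' i)) (hS : S = ⋃ (i) (_ : p i), S' i)
    (hP : ∀ s t, s ≤ t → (P t).comp (P s) = P s) :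
    range Q = closure (⋃ (i) (_ : p i), range (Q' i)) := by
  refine Subset.antisymm ?_ (closure_minimal (iUnion₂_subset fun i hi => ?_) ?_)
  · rw [h.range_eq hP]
    refine closure_mono (iUnion₂_subset fun s hs => ?_)
    obtain ⟨i, hi, hsi⟩ := mem_iUnion₂.1 (hS ▸ hs)
    exact ((h' i hi).range_subset_of_mem hP hsi).trans
      (subset_iUnion₂ (s := fun i _ => range (Q' i)) i hi)
  · exact (h' i hi).range_subset_of_subset h (hS ▸ subset_iUnion₂ (s := fun i _ => S' i) i hi) hP
  · exact h.range_eq hP ▸ isClosed_closure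

end IsStrongNetLimit

end NetLimit

open Cardinal in
theorem statement5_general {X : Type} [NormedAddCommGroup X] [NormedSpace ℝ X]
    {Γ : Type} [PartialOrder Γ] (Sk : ProjSkeleton X Γ)
    (hone : ∀ s, ‖Sk.P s‖ = 1)
    (κ : Ordinal) (T : Ordinal → Set Γ)
    (hmono : ∀ α β, α ≤ β → β < κ → T α ⊆ T β)
    (hcont : ∀ δ, δ < κ → Order.IsSuccLimit δ → T δ = ⋃ ξ < δ, T ξ)
    (hdir : ∀ α, α < κ → ∀ s ∈ T α, ∀ t ∈ T α, ∃ v ∈ T α, s ≤ v ∧ t ≤ v)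
    (hcard : ∀ α, α < κ → Cardinal.mk (T α) ≤ α.card + Cardinal.aleph0)
    (hdense : closure (⋃ α < κ, ⋃ s ∈ T α, Set.range (Sk.P s)) = Set.univ)
    (hlim : ∀ α, α < κ → ∀ x : X, ∃ y : X, ∀ ε > (0:ℝ),
      ∃ t ∈ T α, ∀ s ∈ T α, t ≤ s → ‖Sk.P s x - y‖ < ε) :
    ∃ Q : Ordinal → X →L[ℝ] X,
      (∀ α, α < κ → ∀ x : X, ∀ ε > (0:ℝ),
        ∃ t ∈ T α, ∀ s ∈ T α, t ≤ s → ‖Sk.P s x - Q α x‖ < ε) ∧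
      (∀ α, α < κ → ‖Q α‖ = 1 ∧ (Q α).comp (Q α) = Q α) ∧
      (∀ α, α < κ → Set.range (Q α) = closure (⋃ s ∈ T α, Set.range (Sk.P s))) ∧
      (∀ α, α < κ → ∃ A : Set X, A ⊆ Set.range (Q α) ∧
        Cardinal.mk A ≤ α.card + Cardinal.aleph0 ∧ Set.range (Q α) ⊆ closure A) ∧
      (∀ α β, α < β → β < κ →
        (Q α).comp (Q β) = Q α ∧ (Q β).comp (Q α) = Q α) ∧
      (∀ δ, δ < κ → Order.IsSuccLimit δ →
        Set.range (Q δ) = closure (⋃ ξ < δ, Set.range (Q ξ))) ∧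
      closure (⋃ α < κ, Set.range (Q α)) = Set.univ := by
  have hPl : ∀ s t, s ≤ t → (Sk.P s).comp (Sk.P t) = Sk.P s :=
    fun s t h => (Sk.comp_of_le s t h).1
  have hPr : ∀ s t, s ≤ t → (Sk.P t).comp (Sk.P s) = Sk.P s :=
    fun s t h => (Sk.comp_of_le s t h).2
  have hQ : ∀ α, ∃ Q, α < κ → IsStrongNetLimit Sk.P (T α) Q := fun α =>
    if hα : α < κ then
      (exists_isStrongNetLimit (hdir α hα) (fun s _ => (hone s).le) (hlim α hα)).imp
        fun _ hQ _ => hQ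
    else ⟨0, fun h => absurd h hα⟩
  choose Q hQ using hQ
  refine ⟨Q, fun α hα => (hQ α hα).forall_norm_sub_lt,
    fun α hα => ⟨(hQ α hα).norm_eq_one hPr fun s _ => hone s, (hQ α hα).isIdempotentElem hPr⟩,
    fun α hα => (hQ α hα).range_eq hPr, fun α hα => ?_,
    fun α β hαβ hβ =>
      (hQ α (hαβ.trans hβ)).comp_eq_of_subset (hQ β hβ) (hmono α β hαβ.le hβ) hPl hPr,
    fun δ hδ hδlim => (hQ δ hδ).range_eq_closure_iUnion (fun ξ hξ => hQ ξ (hξ.trans hδ))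
      (hcont δ hδ hδlim) hPr, ?_⟩
  · obtain ⟨A, hAU, hAcard, hUA⟩ :=
      exists_subset_biUnion_mk_le_closure fun s (_ : s ∈ T α) => Sk.sep s
    rw [(hQ α hα).range_eq hPr]
    refine ⟨A, hAU.trans subset_closure, hAcard.trans ?_, closure_minimal hUA isClosed_closure⟩
    calc #(T α) * ℵ₀ ≤ (α.card + ℵ₀) * ℵ₀ := mul_le_mul_left (hcard α hα) _
      _ = α.card + ℵ₀ := mul_aleph0_eq le_add_self
  · refine eq_univ_of_univ_subset (hdense ▸ closure_mono (iUnion₂_mono fun α hα => ?_))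
    exact iUnion₂_subset fun s hs => (hQ α hα).range_subset_of_mem hPr hs

open Cardinal in
/-- from a 1-projectional skeleton and a continuous increasing chain
`{T α : α < κ}` of up-directed subsets of `Γ` with `|T α| ≤ |α| + ℵ₀` whose images
are dense in `X`, and such that the net limits `P_α x = lim_{s ∈ T α} P s x` exist,
one obtains a projectional resolution of the identity `{Q α : α < κ}`. -/
theorem statement5 {X : Type} [NormedAddCommGroup X] [NormedSpace ℝ X] [CompleteSpace X]
    {Γ : Type} [PartialOrder Γ] (Sk : ProjSkeleton X Γ)
    (hone : ∀ s, ‖Sk.P s‖ = 1)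
    (κ : Ordinal) (T : Ordinal → Set Γ)
    (hmono : ∀ α β, α ≤ β → β < κ → T α ⊆ T β)
    (hcont : ∀ δ, δ < κ → Order.IsSuccLimit δ → T δ = ⋃ ξ < δ, T ξ)
    (hdir : ∀ α, α < κ → ∀ s ∈ T α, ∀ t ∈ T α, ∃ v ∈ T α, s ≤ v ∧ t ≤ v)
    (hcard : ∀ α, α < κ → Cardinal.mk (T α) ≤ α.card + Cardinal.aleph0)
    (hdense : closure (⋃ α < κ, ⋃ s ∈ T α, Set.range (Sk.P s)) = Set.univ)
    (hlim : ∀ α, α < κ → ∀ x : X, ∃ y : X, ∀ ε > (0:ℝ),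
      ∃ t ∈ T α, ∀ s ∈ T α, t ≤ s → ‖Sk.P s x - y‖ < ε) :
    ∃ Q : Ordinal → X →L[ℝ] X,
      (∀ α, α < κ → ∀ x : X, ∀ ε > (0:ℝ),
        ∃ t ∈ T α, ∀ s ∈ T α, t ≤ s → ‖Sk.P s x - Q α x‖ < ε) ∧
      (∀ α, α < κ → ‖Q α‖ = 1 ∧ (Q α).comp (Q α) = Q α) ∧
      (∀ α, α < κ → Set.range (Q α) = closure (⋃ s ∈ T α, Set.range (Sk.P s))) ∧
      (∀ α, α < κ → ∃ A : Set X, A ⊆ Set.range (Q α) ∧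
        Cardinal.mk A ≤ α.card + Cardinal.aleph0 ∧ Set.range (Q α) ⊆ closure A) ∧
      (∀ α β, α < β → β < κ →
        (Q α).comp (Q β) = Q α ∧ (Q β).comp (Q α) = Q α) ∧
      (∀ δ, δ < κ → Order.IsSuccLimit δ →
        Set.range (Q δ) = closure (⋃ ξ < δ, Set.range (Q ξ))) ∧
      closure (⋃ α < κ, Set.range (Q α)) = Set.univ :=
  statement5_general Sk hone κ T hmono hcont hdir hcard hdense hlim
end

section
/- Let X be a Banach space with a projectional skeleton 𝔰 = {P_s : s ∈ Γ} with sup_s ‖P_s‖ ≤ r. Then D(𝔰) := ⋃_{s∈Γ} P_s* X* is an r-norming linear subspace of X*. -/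
open ContinuousLinearMap

lemma norm_le_mul_sSup_of_apply_eq_norm {X : Type*} [NormedAddCommGroup X]
    [NormedSpace ℝ X] {S : Set (X →L[ℝ] ℝ)} {x : X} {r : ℝ} {φ : X →L[ℝ] ℝ}
    (hφS : φ ∈ S) (hφx : φ x = ‖x‖) (hφr : ‖φ‖ ≤ r) :
    ‖x‖ ≤ r * sSup {t : ℝ | ∃ φ ∈ S, φ ≠ 0 ∧ t = |φ x| / ‖φ‖} := by
  set T := {t : ℝ | ∃ φ ∈ S, φ ≠ 0 ∧ t = |φ x| / ‖φ‖}
  have hT_nonneg : 0 ≤ sSup T := Real.sSup_nonneg <| by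
    rintro t ⟨ψ, -, -, rfl⟩
    positivity
  have hr : 0 ≤ r := (norm_nonneg φ).trans hφr
  rcases eq_or_ne φ 0 with rfl | hφ0
  · rw [← hφx, zero_apply]
    positivity
  have hT_bdd : BddAbove T := by
    refine ⟨‖x‖, ?_⟩
    rintro t ⟨ψ, -, hψ0, rfl⟩
    exact div_le_of_le_mul₀ (norm_nonneg _) (norm_nonneg _)
      (by simpa [mul_comm] using ψ.le_opNorm x)
  have hφT : |φ x| / ‖φ‖ ∈ T := ⟨φ, hφS, hφ0, rfl⟩
  calc ‖x‖ = ‖φ‖ * (|φ x| / ‖φ‖) := by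
          rw [hφx, abs_norm]; exact (mul_div_cancel₀ _ (norm_ne_zero_iff.mpr hφ0)).symm
    _ ≤ r * sSup T := mul_le_mul hφr (le_csSup hT_bdd hφT) (by positivity) hr

namespace ProjSkeleton

variable {X Γ : Type*} [NormedAddCommGroup X] [NormedSpace ℝ X] [PartialOrder Γ]
  (Sk : ProjSkeleton X Γ)

lemma comp_P_comp_P_of_le {s t : Γ} (hst : s ≤ t) (φ : X →L[ℝ] ℝ) :
    (φ.comp (Sk.P s)).comp (Sk.P t) = φ.comp (Sk.P s) := by
  rw [comp_assoc, (Sk.comp_of_le s t hst).1]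

/-- The subspace `D(𝔰) = ⋃ₛ (P s)* X*` of `X*`. -/
def dualSubspace : Submodule ℝ (X →L[ℝ] ℝ) where
  carrier := {ψ | ∃ s : Γ, ∃ φ : X →L[ℝ] ℝ, ψ = φ.comp (Sk.P s)}
  add_mem' := by
    rintro _ _ ⟨s, φ, rfl⟩ ⟨t, ψ, rfl⟩
    obtain ⟨u, hsu, htu⟩ := Sk.directed s t
    refine ⟨u, φ.comp (Sk.P s) + ψ.comp (Sk.P t), ?_⟩
    rw [add_comp, Sk.comp_P_comp_P_of_le hsu, Sk.comp_P_comp_P_of_le htu]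
  zero_mem' := by
    obtain ⟨s, -⟩ := Sk.covers 0
    exact ⟨s, 0, (zero_comp _).symm⟩
  smul_mem' := by
    rintro c _ ⟨s, φ, rfl⟩
    exact ⟨s, c • φ, (smul_comp _ _ _).symm⟩

lemma coe_dualSubspace :
    (Sk.dualSubspace : Set (X →L[ℝ] ℝ)) =
      {ψ | ∃ s : Γ, ∃ φ : X →L[ℝ] ℝ, ψ = φ.comp (Sk.P s)} :=
  rfl

lemma exists_mem_dualSubspace_apply_eq_norm {r : ℝ} (hbound : ∀ s, ‖Sk.P s‖ ≤ r) (x : X) :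
    ∃ φ ∈ Sk.dualSubspace, φ x = ‖x‖ ∧ ‖φ‖ ≤ r := by
  obtain ⟨s, hs⟩ := Sk.covers x
  obtain ⟨g, hg, hgx⟩ := exists_dual_vector'' ℝ x
  refine ⟨g.comp (Sk.P s), ⟨s, g, rfl⟩,
    by rw [comp_apply, hs, hgx, RCLike.ofReal_real_eq_id, id], ?_⟩
  calc ‖g.comp (Sk.P s)‖ ≤ ‖g‖ * ‖Sk.P s‖ := opNorm_comp_le _ _
    _ ≤ 1 * r := mul_le_mul hg (hbound s) (norm_nonneg _) zero_le_one
    _ = r := one_mul r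

end ProjSkeleton

theorem statement6_general {X : Type*} [NormedAddCommGroup X] [NormedSpace ℝ X]
    {Γ : Type*} [PartialOrder Γ] (Sk : ProjSkeleton X Γ)
    (r : ℝ) (hbound : ∀ s, ‖Sk.P s‖ ≤ r)
    (D : Set (X →L[ℝ] ℝ))
    (hD : D = {ψ : X →L[ℝ] ℝ | ∃ s : Γ, ∃ φ : X →L[ℝ] ℝ, ψ = φ.comp (Sk.P s)}) :
    (∀ φ ∈ D, ∀ ψ ∈ D, φ + ψ ∈ D) ∧
    (∀ c : ℝ, ∀ φ ∈ D, c • φ ∈ D) ∧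
    (∀ x : X, ‖x‖ ≤ r * sSup {t : ℝ | ∃ φ ∈ D, φ ≠ 0 ∧ t = |φ x| / ‖φ‖}) := by
  rw [← Sk.coe_dualSubspace] at hD
  subst hD
  refine ⟨fun φ hφ ψ hψ ↦ Sk.dualSubspace.add_mem hφ hψ,
    fun c φ hφ ↦ Sk.dualSubspace.smul_mem c hφ, fun x ↦ ?_⟩
  obtain ⟨φ, hφD, hφx, hφr⟩ := Sk.exists_mem_dualSubspace_apply_eq_norm hbound x
  exact norm_le_mul_sSup_of_apply_eq_norm hφD hφx hφr

/-- for a projectional skeleton with `sup ‖P s‖ ≤ r`, the space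
`D(𝔰) = ⋃ₛ P s* X*` (i.e. all functionals of the form `φ ∘ P s`) is an
`r`-norming linear subspace of `X*`. -/
theorem statement6 {X : Type*} [NormedAddCommGroup X] [NormedSpace ℝ X] [CompleteSpace X]
    {Γ : Type*} [PartialOrder Γ] (Sk : ProjSkeleton X Γ)
    (r : ℝ) (hbound : ∀ s, ‖Sk.P s‖ ≤ r)
    (D : Set (X →L[ℝ] ℝ))
    (hD : D = {ψ : X →L[ℝ] ℝ | ∃ s : Γ, ∃ φ : X →L[ℝ] ℝ, ψ = φ.comp (Sk.P s)}) :
    (∀ φ ∈ D, ∀ ψ ∈ D, φ + ψ ∈ D) ∧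
    (∀ c : ℝ, ∀ φ ∈ D, c • φ ∈ D) ∧
    (∀ x : X, ‖x‖ ≤ r * sSup {t : ℝ | ∃ φ ∈ D, φ ≠ 0 ∧ t = |φ x| / ‖φ‖}) :=
  statement6_general Sk r hbound D hD
end

section
/- Let X be a Banach space, and let D, E ⊆ X* be norming linear subspaces each satisfying: (i) the weak* closure of every countable subset of the space is contained in it, and (ii) the space is countably tight in the weak* topology. If D ∩ E is total over X (i.e. separates points of X), then D = E. -/
open NormedSpace

/-- `D` is norming: `x ↦ sup{|φ x|/‖φ‖ : φ ∈ D \ {0}}` is an equivalent norm. -/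
def IsNorming {X : Type*} [NormedAddCommGroup X] [NormedSpace ℝ X]
    (D : Set (X →L[ℝ] ℝ)) : Prop :=
  ∃ c > (0:ℝ), ∀ x : X,
    c * ‖x‖ ≤ sSup {t : ℝ | ∃ φ ∈ D, φ ≠ 0 ∧ t = |φ x| / ‖φ‖}

/-!
The weak* closure of the total subspace `D ∩ E` is all of `X*`, so every `φ ∈ D` is a weak* limit
of elements of `D ∩ E`. Countable tightness of `D` lets us take these from a countable subset of
`D ∩ E ⊆ E`, and countable closedness of `E` then puts `φ` in `E`. By symmetry `D = E`.
-/

open Set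

section Topology

variable {Y : Type*} [TopologicalSpace Y]

def IsCountablyClosed (S : Set Y) : Prop :=
  ∀ A ⊆ S, A.Countable → closure A ⊆ S

def IsCountablyTight (S : Set Y) : Prop :=
  ∀ A ⊆ S, ∀ p ∈ S, p ∈ closure A → ∃ A₀ ⊆ A, A₀.Countable ∧ p ∈ closure A₀

theorem subset_of_isCountablyTight_of_isCountablyClosed {S T A : Set Y}
    (hS : IsCountablyTight S) (hT : IsCountablyClosed T) (hAS : A ⊆ S) (hAT : A ⊆ T)
    (hSA : S ⊆ closure A) : S ⊆ T := by
  intro p hp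
  obtain ⟨A₀, hA₀A, hA₀, hpA₀⟩ := hS A hAS p hp (hSA hp)
  exact hT A₀ (hA₀A.trans hAT) hA₀ hpA₀

end Topology

theorem Submodule.exists_strongDual_forall_eq_zero_of_notMem_closure {V : Type*}
    [AddCommGroup V] [Module ℝ V] [TopologicalSpace V] [IsTopologicalAddGroup V]
    [ContinuousSMul ℝ V] [LocallyConvexSpace ℝ V] (M : Submodule ℝ V) {v : V}
    (hv : v ∉ closure (M : Set V)) :
    ∃ f : StrongDual ℝ V, (∀ m ∈ M, f m = 0) ∧ f v ≠ 0 := by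
  obtain ⟨f, u, hMu, huv⟩ :=
    geometric_hahn_banach_closed_point M.topologicalClosure.convex isClosed_closure hv
  have hu : 0 < u := by simpa using hMu 0 M.topologicalClosure.zero_mem
  refine ⟨f, fun m hm => ?_, by linarith⟩
  by_contra hfm
  -- rescaling `m` makes `f` take the value `u`, which the separation forbids
  have := hMu ((u / f m) • m) (M.le_topologicalClosure (M.smul_mem _ hm))
  rw [map_smul, smul_eq_mul, div_mul_cancel₀ _ hfm] at this
  exact lt_irrefl u this

instance WeakDual.instLocallyConvexSpace {E : Type*} [AddCommGroup E] [Module ℝ E]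
    [TopologicalSpace E] : LocallyConvexSpace ℝ (WeakDual ℝ E) :=
  WeakBilin.locallyConvexSpace

theorem dense_image_toWeakDual_of_separating {X : Type*} [NormedAddCommGroup X]
    [NormedSpace ℝ X] (F : Submodule ℝ (X →L[ℝ] ℝ))
    (hF : ∀ x : X, (∀ φ ∈ F, φ x = 0) → x = 0) :
    Dense (StrongDual.toWeakDual '' (F : Set (X →L[ℝ] ℝ))) := by
  have hM : StrongDual.toWeakDual '' (F : Set (X →L[ℝ] ℝ)) =
      (F.map (StrongDual.toWeakDual (𝕜 := ℝ) (E := X)).toLinearMap : Set (WeakDual ℝ X)) :=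
    (Submodule.map_coe _ F).symm
  rw [hM]
  by_contra hdense
  obtain ⟨ψ, hψ⟩ := not_forall.mp hdense
  obtain ⟨f, hfM, hfψ⟩ := Submodule.exists_strongDual_forall_eq_zero_of_notMem_closure _ hψ
  -- weak*-continuous functionals on `X*` are evaluations at points of `X`
  obtain ⟨x, rfl⟩ := LinearMap.dualEmbedding_surjective (topDualPairing ℝ X) f
  have hx : x = 0 := hF x fun φ hφ => hfM _ (Submodule.mem_map_of_mem hφ)
  exact hfψ (by rw [hx, map_zero]; rfl)

theorem Submodule.le_of_isCountablyTight_of_isCountablyClosed {X : Type*}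
    [NormedAddCommGroup X] [NormedSpace ℝ X] {D E : Submodule ℝ (X →L[ℝ] ℝ)}
    (hD : IsCountablyTight (StrongDual.toWeakDual '' (D : Set (X →L[ℝ] ℝ))))
    (hE : IsCountablyClosed (StrongDual.toWeakDual '' (E : Set (X →L[ℝ] ℝ))))
    (hDE : ∀ x : X, (∀ φ ∈ D ⊓ E, φ x = 0) → x = 0) : D ≤ E := by
  have hsub := subset_of_isCountablyTight_of_isCountablyClosed hD hE
    (image_mono (inf_le_left (b := E))) (image_mono (inf_le_right (a := D)))
    ((dense_image_toWeakDual_of_separating _ hDE).closure_eq ▸ subset_univ _)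
  exact (image_subset_image_iff StrongDual.toWeakDual.injective).mp hsub

theorem statement9_general {X : Type*} [NormedAddCommGroup X] [NormedSpace ℝ X]
    (D E : Submodule ℝ (X →L[ℝ] ℝ))
    (hDcc : ∀ A : Set (WeakDual ℝ X), A ⊆ StrongDual.toWeakDual '' (D : Set (X →L[ℝ] ℝ)) →
      A.Countable → closure A ⊆ StrongDual.toWeakDual '' (D : Set (X →L[ℝ] ℝ)))
    (hEcc : ∀ A : Set (WeakDual ℝ X), A ⊆ StrongDual.toWeakDual '' (E : Set (X →L[ℝ] ℝ)) →
      A.Countable → closure A ⊆ StrongDual.toWeakDual '' (E : Set (X →L[ℝ] ℝ)))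
    (hDct : ∀ A : Set (WeakDual ℝ X), A ⊆ StrongDual.toWeakDual '' (D : Set (X →L[ℝ] ℝ)) →
      ∀ p ∈ StrongDual.toWeakDual '' (D : Set (X →L[ℝ] ℝ)), p ∈ closure A →
        ∃ A₀ ⊆ A, A₀.Countable ∧ p ∈ closure A₀)
    (hEct : ∀ A : Set (WeakDual ℝ X), A ⊆ StrongDual.toWeakDual '' (E : Set (X →L[ℝ] ℝ)) →
      ∀ p ∈ StrongDual.toWeakDual '' (E : Set (X →L[ℝ] ℝ)), p ∈ closure A →
        ∃ A₀ ⊆ A, A₀.Countable ∧ p ∈ closure A₀)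
    (htotal : ∀ x : X, (∀ φ ∈ D ⊓ E, φ x = 0) → x = 0) :
    D = E :=
  le_antisymm (Submodule.le_of_isCountablyTight_of_isCountablyClosed hDct hEcc htotal)
    (Submodule.le_of_isCountablyTight_of_isCountablyClosed hEct hDcc (by rwa [inf_comm]))

/-- if `D, E ⊆ X*` are norming linear subspaces, each weak*-countably
closed (the weak* closure of every countable subset is contained in it) and
weak*-countably tight, and `D ∩ E` separates the points of `X`, then `D = E`. -/
theorem statement9 {X : Type*} [NormedAddCommGroup X] [NormedSpace ℝ X] [CompleteSpace X]
    (D E : Submodule ℝ (X →L[ℝ] ℝ))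
    (hDn : IsNorming (D : Set (X →L[ℝ] ℝ))) (hEn : IsNorming (E : Set (X →L[ℝ] ℝ)))
    (hDcc : ∀ A : Set (WeakDual ℝ X), A ⊆ StrongDual.toWeakDual '' (D : Set (X →L[ℝ] ℝ)) →
      A.Countable → closure A ⊆ StrongDual.toWeakDual '' (D : Set (X →L[ℝ] ℝ)))
    (hEcc : ∀ A : Set (WeakDual ℝ X), A ⊆ StrongDual.toWeakDual '' (E : Set (X →L[ℝ] ℝ)) →
      A.Countable → closure A ⊆ StrongDual.toWeakDual '' (E : Set (X →L[ℝ] ℝ)))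
    (hDct : ∀ A : Set (WeakDual ℝ X), A ⊆ StrongDual.toWeakDual '' (D : Set (X →L[ℝ] ℝ)) →
      ∀ p ∈ StrongDual.toWeakDual '' (D : Set (X →L[ℝ] ℝ)), p ∈ closure A →
        ∃ A₀ ⊆ A, A₀.Countable ∧ p ∈ closure A₀)
    (hEct : ∀ A : Set (WeakDual ℝ X), A ⊆ StrongDual.toWeakDual '' (E : Set (X →L[ℝ] ℝ)) →
      ∀ p ∈ StrongDual.toWeakDual '' (E : Set (X →L[ℝ] ℝ)), p ∈ closure A →
        ∃ A₀ ⊆ A, A₀.Countable ∧ p ∈ closure A₀)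
    (htotal : ∀ x : X, (∀ φ ∈ D ⊓ E, φ x = 0) → x = 0) :
    D = E :=
  statement9_general D E hDcc hEcc hDct hEct htotal
end

section
/- Let X be a Banach space, (X, D) a Plichko pair, and P : X → X a bounded projection with P*D ⊆ D. Then (ker P, D ∩ ker P*) is a Plichko pair; moreover if D is r-norming for X then the restriction of D ∩ ker P* to ker P is (r(1+‖P‖))-norming for ker P, and if A ⊆ X is linearly dense with countable supports witnessing the Plichko pair, then B = {a − Pa : a ∈ A} is linearly dense in ker P and suppt(y, B) = suppt(y, A) for every y ∈ D ∩ ker P*. -/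
/-!
Since `P` is idempotent, `id - P` has range `ker P`, so it carries the dense span of `A` onto
`span B`, which is therefore dense in `ker P`. Dually, `φ ↦ φ - φ ∘ P` maps `D` into
`D ∩ ker P*`, keeps the values on `ker P` and raises norms by at most the factor `1 + ‖P‖`,
which transfers the norming constant `r` to `r (1 + ‖P‖)`.
-/

open Set

theorem closure_span_image_eq_closure_range {R M N : Type*} [Semiring R] [AddCommMonoid M]
    [Module R M] [TopologicalSpace M] [AddCommMonoid N] [Module R N] [TopologicalSpace N]
    (f : M →L[R] N) {A : Set M} (hA : Dense (Submodule.span R A : Set M)) :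
    closure (Submodule.span R (f '' A) : Set N) = closure (range f) := by
  have hspan : (Submodule.span R (f '' A) : Set N) = f '' Submodule.span R A :=
    congrArg SetLike.coe (Submodule.map_span (f : M →ₗ[R] N) A).symm
  rw [hspan]
  refine (closure_mono (image_subset_range _ _)).antisymm (closure_minimal ?_ isClosed_closure)
  calc range f = f '' closure (Submodule.span R A) := by rw [hA.closure_eq, image_univ]
    _ ⊆ closure (f '' Submodule.span R A) := image_closure_subset_closure_image f.continuous

section

variable {X : Type*} [NormedAddCommGroup X] [NormedSpace ℝ X]

theorem range_id_sub_eq_ker {P : X →L[ℝ] X} (hP : IsIdempotentElem P) :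
    range (ContinuousLinearMap.id ℝ X - P) = {x | P x = 0} :=
  (congrArg SetLike.coe <| LinearMap.IsIdempotentElem.ker_eq_range
    (ContinuousLinearMap.IsIdempotentElem.toLinearMap hP)).symm

theorem apply_sub_apply_of_comp_eq_zero {P : X →L[ℝ] X} {y : X →L[ℝ] ℝ} (hyP : y.comp P = 0)
    (a : X) : y (a - P a) = y a := by
  rw [map_sub, ← y.comp_apply, hyP, zero_apply, sub_zero]

theorem sub_comp_comp_eq_zero {P : X →L[ℝ] X} (hP : IsIdempotentElem P) (φ : X →L[ℝ] ℝ) :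
    (φ - φ.comp P).comp P = 0 := by
  rw [ContinuousLinearMap.sub_comp, φ.comp_assoc, ← ContinuousLinearMap.mul_def, hP.eq, sub_self]

theorem norm_sub_comp_le (P : X →L[ℝ] X) (φ : X →L[ℝ] ℝ) :
    ‖φ - φ.comp P‖ ≤ (1 + ‖P‖) * ‖φ‖ :=
  calc ‖φ - φ.comp P‖ ≤ ‖φ‖ + ‖φ‖ * ‖P‖ :=
        (norm_sub_le _ _).trans (by gcongr; exact φ.opNorm_comp_le P)
    _ = (1 + ‖P‖) * ‖φ‖ := by ring

theorem abs_apply_div_norm_le (φ : X →L[ℝ] ℝ) (x : X) : |φ x| / ‖φ‖ ≤ ‖x‖ :=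
  div_le_of_le_mul₀ (norm_nonneg _) (norm_nonneg _) ((φ.le_opNorm x).trans_eq (mul_comm _ _))

theorem abs_apply_div_norm_le_mul {φ ψ : X →L[ℝ] ℝ} {x : X} {c : ℝ} (hc : 0 ≤ c)
    (hψx : ψ x = φ x) (hψ : ‖ψ‖ ≤ c * ‖φ‖) : |φ x| / ‖φ‖ ≤ c * (|ψ x| / ‖ψ‖) := by
  rcases eq_or_ne (φ x) 0 with hφx | hφx
  · rw [hφx, abs_zero, zero_div]
    positivity
  have hφ : 0 < ‖φ‖ := norm_pos_iff.mpr (ne_of_apply_ne (· x) hφx)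
  have hψ₀ : 0 < ‖ψ‖ := norm_pos_iff.mpr (ne_of_apply_ne (· x) (hψx ▸ hφx))
  rw [hψx, mul_div_assoc', div_le_div_iff₀ hφ hψ₀]
  calc |φ x| * ‖ψ‖ ≤ |φ x| * (c * ‖φ‖) := by gcongr
    _ = c * |φ x| * ‖φ‖ := by ring

theorem sep_image_sub_apply_eq_image_sep {P : X →L[ℝ] X} {y : X →L[ℝ] ℝ} (hyP : y.comp P = 0)
    (A : Set X) :
    {b ∈ (fun a => a - P a) '' A | y b ≠ 0} = (fun a => a - P a) '' {a ∈ A | y a ≠ 0} := by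
  ext b
  constructor
  · rintro ⟨⟨a, ha, rfl⟩, hb⟩
    exact ⟨a, ⟨ha, by rwa [apply_sub_apply_of_comp_eq_zero hyP] at hb⟩, rfl⟩
  · rintro ⟨a, ⟨ha, hya⟩, rfl⟩
    exact ⟨mem_image_of_mem _ ha, by rwa [apply_sub_apply_of_comp_eq_zero hyP]⟩

def normingRatios (s : Set (X →L[ℝ] ℝ)) (x : X) : Set ℝ :=
  {t | ∃ φ ∈ s, φ ≠ 0 ∧ t = |φ x| / ‖φ‖}

theorem sSup_normingRatios_le_mul {s s' : Set (X →L[ℝ] ℝ)} {x : X} {c : ℝ} (hc : 0 ≤ c)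
    (h : ∀ φ ∈ s, ∃ ψ ∈ s', ψ x = φ x ∧ ‖ψ‖ ≤ c * ‖φ‖) :
    sSup (normingRatios s x) ≤ c * sSup (normingRatios s' x) := by
  have hbdd : BddAbove (normingRatios s' x) := ⟨‖x‖, by
    rintro _ ⟨ψ, -, -, rfl⟩; exact abs_apply_div_norm_le ψ x⟩
  have hnonneg : 0 ≤ sSup (normingRatios s' x) := Real.sSup_nonneg (by
    rintro _ ⟨ψ, -, -, rfl⟩; positivity)
  refine Real.sSup_le ?_ (by positivity)
  rintro _ ⟨φ, hφ, -, rfl⟩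
  obtain ⟨ψ, hψ, hψx, hψφ⟩ := h φ hφ
  rcases eq_or_ne ψ 0 with rfl | hψ₀
  · rw [← hψx, zero_apply, abs_zero, zero_div]
    positivity
  calc |φ x| / ‖φ‖ ≤ c * (|ψ x| / ‖ψ‖) := abs_apply_div_norm_le_mul hc hψx hψφ
    _ ≤ c * sSup (normingRatios s' x) := by gcongr; exact le_csSup hbdd ⟨ψ, hψ, hψ₀, rfl⟩

end

theorem statement10_general {X : Type*} [NormedAddCommGroup X] [NormedSpace ℝ X]
    (D : Submodule ℝ (X →L[ℝ] ℝ)) (r : ℝ) (hr : 1 ≤ r)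
    (hnorming : ∀ x : X, ‖x‖ ≤ r * sSup {t : ℝ | ∃ φ ∈ D, φ ≠ 0 ∧ t = |φ x| / ‖φ‖})
    (A : Set X) (hAdense : closure (Submodule.span ℝ A : Set X) = Set.univ)
    (hAsupp : ∀ y ∈ D, {a ∈ A | y a ≠ 0}.Countable)
    (P : X →L[ℝ] X) (hP : P.comp P = P)
    (hPD : ∀ φ ∈ D, φ.comp P ∈ D)
    (B : Set X) (hB : B = (fun a => a - P a) '' A) :
    closure (Submodule.span ℝ B : Set X) = {x : X | P x = 0} ∧
    (∀ y ∈ D, y.comp P = 0 → ∀ a : X, y (a - P a) = y a) ∧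
    (∀ y ∈ D, y.comp P = 0 → {b ∈ B | y b ≠ 0}.Countable) ∧
    (∀ x : X, P x = 0 → ‖x‖ ≤ r * (1 + ‖P‖) *
      sSup {t : ℝ | ∃ φ ∈ D, φ.comp P = 0 ∧ φ ≠ 0 ∧ t = |φ x| / ‖φ‖}) := by
  subst hB
  have hPidem : IsIdempotentElem P := hP
  refine ⟨?_, fun y _ => apply_sub_apply_of_comp_eq_zero, fun y hy hyP => ?_, fun x hx => ?_⟩
  · change closure (Submodule.span ℝ ((ContinuousLinearMap.id ℝ X - P) '' A) : Set X) = _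
    rw [closure_span_image_eq_closure_range _ (dense_iff_closure_eq.mpr hAdense),
      range_id_sub_eq_ker hPidem]
    exact (isClosed_eq P.continuous continuous_const).closure_eq
  · rw [sep_image_sub_apply_eq_image_sep hyP]
    exact (hAsupp y hy).image _
  · have hratios : {t : ℝ | ∃ φ ∈ D, φ.comp P = 0 ∧ φ ≠ 0 ∧ t = |φ x| / ‖φ‖} =
        normingRatios {ψ | ψ ∈ D ∧ ψ.comp P = 0} x := by
      ext
      simp only [normingRatios, mem_ofPred_eq, and_assoc]
    have hproject : ∀ φ ∈ (D : Set (X →L[ℝ] ℝ)), ∃ ψ ∈ {ψ | ψ ∈ D ∧ ψ.comp P = 0},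
        ψ x = φ x ∧ ‖ψ‖ ≤ (1 + ‖P‖) * ‖φ‖ := fun φ hφ =>
      ⟨φ - φ.comp P, ⟨D.sub_mem hφ (hPD φ hφ), sub_comp_comp_eq_zero hPidem φ⟩,
        by simp [hx], norm_sub_comp_le P φ⟩
    calc ‖x‖ ≤ r * sSup (normingRatios D x) := hnorming x
      _ ≤ r * ((1 + ‖P‖) * sSup (normingRatios {ψ | ψ ∈ D ∧ ψ.comp P = 0} x)) := by
        gcongr
        exact sSup_normingRatios_le_mul (by positivity) hproject
      _ = _ := by rw [hratios, mul_assoc]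

/-- let `(X, D)` be a Plichko pair (witnessed by the linearly dense
set `A` with countable supports), with `D` an `r`-norming linear subspace, and let
`P` be a bounded projection with `P* D ⊆ D`.  Then `(ker P, D ∩ ker P*)` is a
Plichko pair: `B = {a − Pa : a ∈ A}` is linearly dense in `ker P`, every
`y ∈ D ∩ ker P*` has `suppt(y, B) = suppt(y, A)` (via `y (a − Pa) = y a`) and in
particular countable `B`-support, and the restriction of `D ∩ ker P*` to `ker P`
is `r(1 + ‖P‖)`-norming for `ker P`. -/
theorem statement10 {X : Type*} [NormedAddCommGroup X] [NormedSpace ℝ X] [CompleteSpace X]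
    (D : Submodule ℝ (X →L[ℝ] ℝ)) (r : ℝ) (hr : 1 ≤ r)
    (hnorming : ∀ x : X, ‖x‖ ≤ r * sSup {t : ℝ | ∃ φ ∈ D, φ ≠ 0 ∧ t = |φ x| / ‖φ‖})
    (A : Set X) (hAdense : closure (Submodule.span ℝ A : Set X) = Set.univ)
    (hAsupp : ∀ y ∈ D, {a ∈ A | y a ≠ 0}.Countable)
    (P : X →L[ℝ] X) (hP : P.comp P = P)
    (hPD : ∀ φ ∈ D, φ.comp P ∈ D)
    (B : Set X) (hB : B = (fun a => a - P a) '' A) :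
    closure (Submodule.span ℝ B : Set X) = {x : X | P x = 0} ∧
    (∀ y ∈ D, y.comp P = 0 → ∀ a : X, y (a - P a) = y a) ∧
    (∀ y ∈ D, y.comp P = 0 → {b ∈ B | y b ≠ 0}.Countable) ∧
    (∀ x : X, P x = 0 → ‖x‖ ≤ r * (1 + ‖P‖) *
      sSup {t : ℝ | ∃ φ ∈ D, φ.comp P = 0 ∧ φ ≠ 0 ∧ t = |φ x| / ‖φ‖}) :=
  statement10_general D r hr hnorming A hAdense hAsupp P hP hPD B hB
end

section
/- Consider X = ℓ₁(ω₂+1). Let Γ be the set of countable subsets S of ω₂+1 containing ω₂, ordered by inclusion. For S ∈ Γ define f_S : ω₂+1 → ω₂+1 by f_S(α) = min(S ∩ [α, ω₂]) and Q_S : X → X by (Q_S x)(α) = Σ_{ξ ∈ f_S⁻¹(α)} x(ξ). Then each Q_S is a well-defined linear projection onto ℓ₁(S) with ‖Q_S‖ = 1, and for S ⊆ T in Γ one has Q_T ∘ Q_S = Q_S and Q_S ∘ Q_T = Q_S. -/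
/-!
`Q_S` is the pushforward of `ℓ¹` vectors along the retraction `f_S` of `[0, ω₂]` onto `S`.
Pushforward along any map `g` is a contraction of `ℓ¹` (summing over the fibres of `g` can only
decrease the `ℓ¹` norm), it is functorial, `g_* ∘ h_* = (g ∘ h)_*`, and it sends the point mass at
`i` to the point mass at `g i`, so its norm is exactly one. When `g` is idempotent, `g_*` fixes
every vector supported on the range of `g`, and every `g_* x` is supported there, so `g_*` is a
projection onto those vectors. All identities then reduce to `f_S ∘ f_S = f_S` and, for `S ⊆ T`,
`f_S ∘ f_T = f_S = f_T ∘ f_S`.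
-/

noncomputable section

/-- The ordinal `ω₂`. -/
def om2 : Ordinal.{0} := (Cardinal.aleph 2).ord

/-- The index set `ω₂ + 1 = [0, ω₂]`. -/
abbrev OmTwoPlusOne : Type 1 := Set.Iic om2

/-- The Banach space `ℓ₁(ω₂ + 1)`. -/
abbrev ellOne : Type 1 := lp (fun _ : OmTwoPlusOne => ℝ) 1

/-- `f_S(α) = min (S ∩ [α, ω₂])`. -/
def fS (S : Set Ordinal) (α : Ordinal) : Ordinal := sInf (S ∩ Set.Ici α)

open scoped ENNReal

section FiberwiseSum

variable {ι κ E : Type*} [NormedAddCommGroup E]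

theorem memℓp_one_iff {x : ι → E} : Memℓp x 1 ↔ Summable fun i => ‖x i‖ := by
  simp [memℓp_gen_iff (by norm_num : 0 < (1 : ℝ≥0∞).toReal)]

theorem lp.norm_eq_tsum_norm_of_one (x : lp (fun _ : ι => E) 1) : ‖x‖ = ∑' i, ‖x i‖ := by
  simp [lp.norm_eq_tsum_rpow (by norm_num : 0 < (1 : ℝ≥0∞).toReal)]

theorem lp.summable_norm_of_one (x : lp (fun _ : ι => E) 1) : Summable fun i => ‖x i‖ :=
  memℓp_one_iff.mp (lp.memℓp x)

theorem Summable.fiber [CompleteSpace E] {x : ι → E} (hx : Summable fun i => ‖x i‖)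
    (g : ι → κ) (k : κ) : Summable fun i : {i // g i = k} => x i :=
  hx.of_norm.subtype _

theorem norm_tsum_fiber_le {x : ι → E} (hx : Summable fun i => ‖x i‖) (g : ι → κ) (k : κ) :
    ‖∑' i : {i // g i = k}, x i‖ ≤ ∑' i : {i // g i = k}, ‖x i‖ :=
  norm_tsum_le_tsum_norm (hx.subtype _)

theorem summable_norm_tsum_fiber {x : ι → E} (hx : Summable fun i => ‖x i‖) (g : ι → κ) :
    Summable fun k => ‖∑' i : {i // g i = k}, x i‖ :=
  .of_nonneg_of_le (fun _ => norm_nonneg _) (norm_tsum_fiber_le hx g)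
    (hx.hasSum.tsum_fiberwise g).summable

theorem tsum_norm_tsum_fiber_le {x : ι → E} (hx : Summable fun i => ‖x i‖) (g : ι → κ) :
    ∑' k, ‖∑' i : {i // g i = k}, x i‖ ≤ ∑' i, ‖x i‖ :=
  calc ∑' k, ‖∑' i : {i // g i = k}, x i‖
      ≤ ∑' k, ∑' i : {i // g i = k}, ‖x i‖ :=
        (summable_norm_tsum_fiber hx g).tsum_le_tsum (norm_tsum_fiber_le hx g)
          (hx.hasSum.tsum_fiberwise g).summable
    _ = ∑' i, ‖x i‖ := (hx.hasSum.tsum_fiberwise g).tsum_eq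

theorem tsum_fiber_comp [CompleteSpace E] {μ : Type*} {x : ι → E}
    (hx : Summable fun i => ‖x i‖) (h : ι → κ) (g : κ → μ) (m : μ) :
    ∑' k : {k // g k = m}, ∑' i : {i // h i = k}, x i = ∑' i : {i // g (h i) = m}, x i := by
  let e := Equiv.sigmaSubtypeFiberEquivSubtype h
    (p := fun i => g (h i) = m) (q := fun k => g k = m) fun _ => Iff.rfl
  have hsum : Summable fun p : Σ k : {k // g k = m}, {i // h i = k.1} => x p.2 :=
    (e.summable_iff (f := fun i : {i // g (h i) = m} => x i)).mpr (hx.fiber _ m)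
  rw [← hsum.tsum_sigma]
  exact e.tsum_eq fun i : {i // g (h i) = m} => x i

theorem tsum_fiber_eq_of_forall_ne_zero {x : ι → E} {g : ι → ι} (hg : ∀ i, x i ≠ 0 → g i = i)
    (k : ι) : ∑' i : {i // g i = k}, x i = x k := by
  classical
  have hsingle : {i | g i = k}.indicator x = Pi.single k (x k) := by
    funext i
    by_cases hik : i = k
    · subst hik
      by_cases hfix : g i = i
      · simp [hfix]
      · simp [hfix, not_not.mp (mt (hg i) hfix)]
    · by_cases hx : x i = 0
      · simp [hx, hik]
      · simp [hg i hx, hik]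
  exact (tsum_subtype {i | g i = k} x).trans (by rw [hsingle, tsum_pi_single])

end FiberwiseSum

namespace lp

variable {ι κ μ 𝕜 E : Type*} [NontriviallyNormedField 𝕜] [NormedAddCommGroup E]
  [NormedSpace 𝕜 E] [CompleteSpace E]

variable (𝕜) in
def pushforwardOne (g : ι → κ) : lp (fun _ : ι => E) 1 →L[𝕜] lp (fun _ : κ => E) 1 :=
  LinearMap.mkContinuous
    { toFun x := ⟨fun k => ∑' i : {i // g i = k}, x i,
        memℓp_one_iff.mpr (summable_norm_tsum_fiber (summable_norm_of_one x) g)⟩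
      map_add' x y := lp.ext <| funext fun k =>
        ((summable_norm_of_one x).fiber g k).tsum_add ((summable_norm_of_one y).fiber g k)
      map_smul' c x := lp.ext <| funext fun k =>
        ((summable_norm_of_one x).fiber g k).tsum_const_smul c }
    1 fun x => by
      rw [one_mul, lp.norm_eq_tsum_norm_of_one, lp.norm_eq_tsum_norm_of_one]
      exact tsum_norm_tsum_fiber_le (summable_norm_of_one x) g

@[simp]
theorem pushforwardOne_apply (g : ι → κ) (x : lp (fun _ : ι => E) 1) (k : κ) :
    pushforwardOne 𝕜 g x k = ∑' i : {i // g i = k}, x i :=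
  rfl

theorem pushforwardOne_comp (g : κ → μ) (h : ι → κ) :
    (pushforwardOne 𝕜 g).comp (pushforwardOne 𝕜 h : lp (fun _ : ι => E) 1 →L[𝕜] _) =
      pushforwardOne 𝕜 (g ∘ h) :=
  ContinuousLinearMap.ext fun x => lp.ext <| funext fun m =>
    tsum_fiber_comp (summable_norm_of_one x) h g m

theorem pushforwardOne_single [DecidableEq ι] [DecidableEq κ] (g : ι → κ) (i : ι) (e : E) :
    pushforwardOne 𝕜 g (lp.single 1 i e) = lp.single 1 (g i) e := by
  ext k
  simp only [pushforwardOne_apply, lp.single_apply]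
  by_cases hik : g i = k
  · rw [tsum_eq_single ⟨i, hik⟩ fun j hj => by
      simp [show j.1 ≠ i from fun h => hj (Subtype.ext h)]]
    simp [hik]
  · have hzero (j : {j // g j = k}) : (Pi.single i e : ι → E) j = 0 := by
      simp [show j.1 ≠ i by rintro h; exact hik (h ▸ j.2)]
    simp [hzero, Ne.symm hik]

theorem norm_pushforwardOne [Nonempty ι] [Nontrivial E] (g : ι → κ) :
    ‖(pushforwardOne 𝕜 g : lp (fun _ : ι => E) 1 →L[𝕜] _)‖ = 1 := by
  classical
  refine le_antisymm (LinearMap.mkContinuous_norm_le _ zero_le_one _) ?_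
  obtain ⟨i⟩ := ‹Nonempty ι›
  obtain ⟨e, he⟩ := exists_ne (0 : E)
  have hle := (pushforwardOne 𝕜 g).le_opNorm (lp.single 1 i e : lp (fun _ : ι => E) 1)
  rw [pushforwardOne_single, lp.norm_single one_pos, lp.norm_single one_pos] at hle
  exact (le_mul_iff_one_le_left (norm_pos_iff.mpr he)).mp hle

theorem pushforwardOne_eq_self {g : ι → ι} {x : lp (fun _ : ι => E) 1}
    (hg : ∀ i, x i ≠ 0 → g i = i) : pushforwardOne 𝕜 g x = x :=
  lp.ext <| funext <| tsum_fiber_eq_of_forall_ne_zero hg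

theorem range_pushforwardOne {g : ι → ι} (hg : g ∘ g = g) :
    Set.range (pushforwardOne 𝕜 g : lp (fun _ : ι => E) 1 →L[𝕜] _) =
      {x | ∀ k ∉ Set.range g, x k = 0} := by
  ext x
  constructor
  · rintro ⟨y, rfl⟩ k hk
    have : IsEmpty {i // g i = k} := ⟨fun i => hk ⟨i, i.2⟩⟩
    exact tsum_empty
  · intro hx
    refine ⟨x, pushforwardOne_eq_self fun i hi => ?_⟩
    obtain ⟨j, rfl⟩ : i ∈ Set.range g := not_imp_comm.mp (hx i) hi
    exact congrFun hg j

end lp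

section Retraction

variable {S T : Set Ordinal} {α β : Ordinal}

theorem fS_mem (h : (S ∩ Set.Ici α).Nonempty) : fS S α ∈ S ∩ Set.Ici α :=
  csInf_mem h

theorem fS_le (hβ : β ∈ S) (hαβ : α ≤ β) : fS S α ≤ β :=
  csInf_le' ⟨hβ, hαβ⟩

theorem fS_of_mem (hα : α ∈ S) : fS S α = α :=
  le_antisymm (fS_le hα le_rfl) (fS_mem ⟨α, hα, Set.self_mem_Ici⟩).2

theorem fS_fS_of_subset (hST : S ⊆ T) (h : (S ∩ Set.Ici α).Nonempty) :
    fS S (fS T α) = fS S α := by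
  obtain ⟨hsS, hαs⟩ := fS_mem h
  obtain ⟨-, hαt⟩ := fS_mem (h.mono (Set.inter_subset_inter_left _ hST))
  have hts : fS T α ≤ fS S α := fS_le (hST hsS) hαs
  obtain ⟨hS', ht⟩ := fS_mem ⟨_, hsS, hts⟩
  exact le_antisymm (fS_le hsS hts) (fS_le hS' (le_trans hαt ht))

end Retraction

namespace OmTwoPlusOne

def retract (S : Set Ordinal) (hS : om2 ∈ S) (α : OmTwoPlusOne) : OmTwoPlusOne :=
  ⟨fS S α, fS_le hS α.2⟩

variable {S T : Set Ordinal}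

theorem retract_mem (hS : om2 ∈ S) (α : OmTwoPlusOne) : (retract S hS α).1 ∈ S :=
  (fS_mem ⟨om2, hS, α.2⟩).1

theorem retract_eq_self_iff {hS : om2 ∈ S} {α : OmTwoPlusOne} : retract S hS α = α ↔ α.1 ∈ S :=
  ⟨fun h => h ▸ retract_mem hS α, fun h => Subtype.ext (fS_of_mem h)⟩

theorem range_retract (hS : om2 ∈ S) : Set.range (retract S hS) = {α | α.1 ∈ S} :=
  Set.ext fun α =>
    ⟨by rintro ⟨β, rfl⟩; exact retract_mem hS β, fun h => ⟨α, retract_eq_self_iff.mpr h⟩⟩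

theorem retract_comp_retract_of_subset (hS : om2 ∈ S) (hT : om2 ∈ T) (hST : S ⊆ T) :
    retract S hS ∘ retract T hT = retract S hS :=
  funext fun α => Subtype.ext (fS_fS_of_subset hST ⟨om2, hS, α.2⟩)

theorem retract_comp_retract_of_subset' (hS : om2 ∈ S) (hT : om2 ∈ T) (hST : S ⊆ T) :
    retract T hT ∘ retract S hS = retract S hS :=
  funext fun α => retract_eq_self_iff.mpr (hST (retract_mem hS α))

theorem pushforwardOne_retract_apply (hS : om2 ∈ S) (x : ellOne) (β : OmTwoPlusOne) :
    lp.pushforwardOne ℝ (retract S hS) x β =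
      ∑' ξ : {ξ : OmTwoPlusOne // fS S ξ.val = β.val}, x ξ :=
  (Equiv.subtypeEquivRight (p := fun ξ => retract S hS ξ = β)
    (q := fun ξ : OmTwoPlusOne => fS S ξ.val = β.val) fun _ => Subtype.ext_iff).tsum_eq
    fun ξ => x ξ

end OmTwoPlusOne

theorem statement15_general (S T : Set Ordinal)
    (hSom : om2 ∈ S)
    (hST : S ⊆ T) :
    ∃ QS QT : ellOne →L[ℝ] ellOne,
      (∀ (x : ellOne) (β : OmTwoPlusOne),
        QS x β = ∑' ξ : {ξ : OmTwoPlusOne // fS S ξ.val = β.val}, x ξ) ∧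
      (∀ (x : ellOne) (β : OmTwoPlusOne),
        QT x β = ∑' ξ : {ξ : OmTwoPlusOne // fS T ξ.val = β.val}, x ξ) ∧
      QS.comp QS = QS ∧ ‖QS‖ = 1 ∧
      Set.range QS = {x : ellOne | ∀ β : OmTwoPlusOne, β.val ∉ S → x β = 0} ∧
      QT.comp QS = QS ∧ QS.comp QT = QS := by
  let gS := OmTwoPlusOne.retract S hSom
  let gT := OmTwoPlusOne.retract T (hST hSom)
  have hidem : gS ∘ gS = gS :=
    OmTwoPlusOne.retract_comp_retract_of_subset hSom hSom subset_rfl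
  refine ⟨lp.pushforwardOne ℝ gS, lp.pushforwardOne ℝ gT,
    OmTwoPlusOne.pushforwardOne_retract_apply hSom,
    OmTwoPlusOne.pushforwardOne_retract_apply (hST hSom), ?_, lp.norm_pushforwardOne gS, ?_, ?_, ?_⟩
  · rw [lp.pushforwardOne_comp, hidem]
  · rw [lp.range_pushforwardOne hidem, OmTwoPlusOne.range_retract]
    rfl
  · rw [lp.pushforwardOne_comp, OmTwoPlusOne.retract_comp_retract_of_subset' hSom _ hST]
  · rw [lp.pushforwardOne_comp, OmTwoPlusOne.retract_comp_retract_of_subset hSom _ hST]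

/-- for countable `S ⊆ T ⊆ ω₂ + 1` both containing `ω₂`, the maps
`(Q_S x)(α) = Σ_{ξ ∈ f_S⁻¹(α)} x(ξ)` are well-defined norm-one linear projections
of `ℓ₁(ω₂+1)` onto `ℓ₁(S)`, and `Q_T ∘ Q_S = Q_S = Q_S ∘ Q_T`. -/
theorem statement15 (S T : Set Ordinal)
    (hSc : S.Countable) (hSom : om2 ∈ S) (hSsub : S ⊆ Set.Iic om2)
    (hTc : T.Countable) (hTom : om2 ∈ T) (hTsub : T ⊆ Set.Iic om2)
    (hST : S ⊆ T) :
    ∃ QS QT : ellOne →L[ℝ] ellOne,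
      (∀ (x : ellOne) (β : OmTwoPlusOne),
        QS x β = ∑' ξ : {ξ : OmTwoPlusOne // fS S ξ.val = β.val}, x ξ) ∧
      (∀ (x : ellOne) (β : OmTwoPlusOne),
        QT x β = ∑' ξ : {ξ : OmTwoPlusOne // fS T ξ.val = β.val}, x ξ) ∧
      QS.comp QS = QS ∧ ‖QS‖ = 1 ∧
      Set.range QS = {x : ellOne | ∀ β : OmTwoPlusOne, β.val ∉ S → x β = 0} ∧
      QT.comp QS = QS ∧ QS.comp QT = QS :=
  statement15_general S T hSom hST

end
end

section
/- With Γ, f_S, Q_S on ℓ₁(ω₂+1) as above, the family {Q_S : S ∈ Γ} is not commutative on any cofinal subset: for every cofinal Γ' ⊆ Γ there exist S, T ∈ Γ' with Q_S ∘ Q_T ≠ Q_T ∘ Q_S. Consequently there exist S, T ∈ Γ and ξ ≤ ω₂ such that f_S(f_T(ξ)) ≠ f_T(f_S(ξ)). -/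
/-!
Since `Q_S` sends the unit vector `e_ξ` to `e_{f_S ξ}`, commuting projections would force
`f_S ∘ f_T = f_T ∘ f_S` on `[0, ω₂]`. Given a cofinal `Γ'`, pick `δ < ω₂` of uncountable
cofinality below which the suprema `sup (S ∩ ω₂)`, `S ∈ Γ'`, are cofinal. A set `T ∈ Γ'`
containing `δ` is countable, so `T ∩ δ` is bounded by some `τ < δ`, and an `S ∈ Γ'` with
`τ < sup (S ∩ ω₂) < δ` has a point `ξ ∈ (τ, δ)`. Then `f_S (f_T ξ) = f_S δ = ω₂` while
`f_T (f_S ξ) = f_T ξ = δ`.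
-/

noncomputable section

/-- The poset `Γ` of countable subsets of `ω₂ + 1` containing `ω₂`. -/
def skelΓ : Set (Set Ordinal) :=
  {S | S.Countable ∧ om2 ∈ S ∧ S ⊆ Set.Iic om2}

open Ordinal Cardinal Order Set

theorem Ordinal.sSup_lt_of_countable {s : Set Ordinal.{u}} {a : Ordinal.{u}} (hs : s.Countable)
    (ha : ℵ₀ < a.cof) (h : ∀ i ∈ s, i < a) : sSup s < a := by
  refine sSup_lt_of_lt_cof ?_ h
  rw [← lift_cof]
  exact hs.le_aleph0.trans_lt (by simpa using Cardinal.lift_strictMono.{u, u + 1} ha)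

theorem Cardinal.IsRegular.exists_aleph0_lt_cof_cofinally_lt {κ : Cardinal} (hκ : κ.IsRegular)
    (hκ₁ : ℵ₁ < κ) {g : Ordinal → Ordinal} (hg : ∀ γ < κ.ord, g γ < κ.ord) :
    ∃ δ < κ.ord, ℵ₀ < δ.cof ∧ ∀ τ < δ, ∃ γ, τ < γ ∧ γ < δ ∧ g γ < δ := by
  have hω₁ : IsSuccLimit (ord ℵ₁) := isSuccLimit_ord (aleph0_le_aleph 1)
  -- `deriv g` is normal, so its value at the limit `ω₁` has cofinality `ℵ₁`.
  refine ⟨deriv g (ord ℵ₁), Cardinal.deriv_lt_ord hκ (aleph0_lt_aleph_one.trans hκ₁).ne' hg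
    (ord_lt_ord.2 hκ₁), ?_, fun τ hτ => ?_⟩
  · rw [cof_map_of_isNormal (isNormal_deriv g) hω₁, isRegular_aleph_one.cof_ord]
    exact aleph0_lt_aleph_one
  obtain ⟨β, hβ, hτβ⟩ := ((isNormal_deriv g).lt_iff_exists_lt hω₁).1 hτ
  have hnext : deriv g (β + 1) < deriv g (ord ℵ₁) :=
    deriv_strictMono g (hω₁.add_one_lt hβ)
  refine ⟨deriv g β + 1, hτβ.trans (lt_add_one _), ?_, ?_⟩
  · exact ((deriv_strictMono g (lt_add_one β)).succ_le ..).trans_lt hnext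
  · calc g (deriv g β + 1) ≤ nfp g (deriv g β + 1) := iterate_le_nfp g _ 1
      _ = deriv g (β + 1) := (deriv_add_one g β).symm
      _ < deriv g (ord ℵ₁) := hnext

theorem fS_eq {S : Set Ordinal} {ξ δ : Ordinal} (hδ : δ ∈ S) (hξδ : ξ ≤ δ)
    (h : ∀ t ∈ S, ξ ≤ t → δ ≤ t) : fS S ξ = δ :=
  IsLeast.csInf_eq ⟨⟨hδ, hξδ⟩, fun t ht => h t ht.1 ht.2⟩

theorem fS_of_mem_s16 {S : Set Ordinal} {ξ : Ordinal} (hξ : ξ ∈ S) : fS S ξ = ξ :=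
  fS_eq hξ le_rfl fun _ _ h => h

theorem fS_le_s16 {S : Set Ordinal} {ξ m : Ordinal} (hm : m ∈ S) (hξm : ξ ≤ m) : fS S ξ ≤ m :=
  csInf_le' ⟨hm, hξm⟩

theorem fS_fS_ne {S T : Set Ordinal} {ξ δ m : Ordinal} (hξS : ξ ∈ S) (hδT : δ ∈ T) (hmS : m ∈ S)
    (hξδ : ξ < δ) (hδm : δ < m) (hT : ∀ t ∈ T, t < δ → t < ξ) (hS : ∀ s ∈ S, s < m → s < δ) :
    fS S (fS T ξ) ≠ fS T (fS S ξ) := by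
  have hTξ : fS T ξ = δ :=
    fS_eq hδT hξδ.le fun t ht hξt => not_lt.1 fun htδ => (hT t ht htδ).not_ge hξt
  have hSδ : fS S δ = m :=
    fS_eq hmS hδm.le fun s hs hδs => not_lt.1 fun hsm => (hS s hs hsm).not_ge hδs
  rw [fS_of_mem_s16 hξS, hTξ, hSδ]
  exact hδm.ne'

theorem isRegular_aleph_two : (ℵ_ 2).IsRegular := by
  simpa [one_add_one_eq_two] using isRegular_aleph_add_one 1

theorem sSup_inter_Iio_om2_lt {S : Set Ordinal} (hS : S ∈ skelΓ) : sSup (S ∩ Iio om2) < om2 :=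
  sSup_lt_of_countable (hS.1.mono inter_subset_left) (by
    rw [om2, isRegular_aleph_two.cof_ord]
    exact aleph0_lt_aleph_one.trans (aleph_lt_aleph.2 one_lt_two)) fun _ h => h.2

theorem pair_mem_skelΓ {γ : Ordinal} (hγ : γ ≤ om2) : ({γ, om2} : Set Ordinal) ∈ skelΓ :=
  ⟨(countable_singleton _).insert _, mem_insert_of_mem _ rfl, by
    rintro x (rfl | rfl) <;> simp [hγ]⟩

theorem map_single_eq_single_fS {Q : Set Ordinal → (ellOne →L[ℝ] ellOne)}
    (hQ : ∀ S ∈ skelΓ, ∀ (x : ellOne) (β : OmTwoPlusOne),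
      Q S x β = ∑' ξ : {ξ : OmTwoPlusOne // fS S ξ.val = β.val}, x ξ)
    {S : Set Ordinal} (hS : S ∈ skelΓ) (ξ : OmTwoPlusOne) :
    Q S (lp.single 1 ξ 1) = lp.single 1 ⟨fS S ξ, fS_le_s16 hS.2.1 ξ.2⟩ 1 := by
  classical
  ext β
  rw [hQ S hS]
  simp only [lp.single_apply, Pi.single_apply]
  by_cases h : fS S ξ = β
  · rw [tsum_eq_single ⟨ξ, h⟩ fun ζ hζ => if_neg fun h' => hζ (Subtype.ext h'),
      if_pos rfl, if_pos (Subtype.ext h.symm)]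
  · rw [if_neg fun h' => h (congrArg Subtype.val h').symm]
    refine (tsum_congr fun ζ : {ζ : OmTwoPlusOne // fS S ζ = β} => if_neg ?_).trans tsum_zero
    rintro rfl
    exact h ζ.2

theorem comp_ne_of_fS_fS_ne {Q : Set Ordinal → (ellOne →L[ℝ] ellOne)}
    (hQ : ∀ S ∈ skelΓ, ∀ (x : ellOne) (β : OmTwoPlusOne),
      Q S x β = ∑' ξ : {ξ : OmTwoPlusOne // fS S ξ.val = β.val}, x ξ)
    {S T : Set Ordinal} (hS : S ∈ skelΓ) (hT : T ∈ skelΓ) {ξ : Ordinal} (hξ : ξ ≤ om2)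
    (hne : fS S (fS T ξ) ≠ fS T (fS S ξ)) :
    (Q S).comp (Q T) ≠ (Q T).comp (Q S) := by
  classical
  intro h
  have := congrArg (fun P => P (lp.single 1 ⟨ξ, hξ⟩ 1)
    ⟨fS S (fS T ξ), fS_le_s16 hS.2.1 (fS_le_s16 hT.2.1 hξ)⟩) h
  simp only [ContinuousLinearMap.comp_apply, map_single_eq_single_fS hQ hS,
    map_single_eq_single_fS hQ hT, lp.single_apply, Pi.single_apply, Subtype.ext_iff] at this
  simp [hne] at this

theorem exists_fS_fS_ne_of_cofinal {Γ' : Set (Set Ordinal)} (hsub : Γ' ⊆ skelΓ)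
    (hcof : ∀ S ∈ skelΓ, ∃ T ∈ Γ', S ⊆ T) :
    ∃ S ∈ Γ', ∃ T ∈ Γ', ∃ ξ ≤ om2, fS S (fS T ξ) ≠ fS T (fS S ξ) := by
  have hbdd : ∀ {s : Set Ordinal} {a : Ordinal}, BddAbove (s ∩ Iio a) :=
    fun {_ a} => ⟨a, fun _ h => h.2.le⟩
  have hunbdd : ∀ γ < om2, ∃ S ∈ Γ', γ < sSup (S ∩ Iio om2) := by
    intro γ hγ
    have hγ₁ : γ + 1 < om2 := (isSuccLimit_ord (aleph0_le_aleph 2)).add_one_lt hγ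
    obtain ⟨S, hS, hγS⟩ := hcof _ (pair_mem_skelΓ hγ₁.le)
    exact ⟨S, hS, (lt_add_one γ).trans_le (le_csSup hbdd ⟨hγS (mem_insert _ _), hγ₁⟩)⟩
  choose! σ hσΓ' hσ using hunbdd
  obtain ⟨δ, hδ, hcofδ, hδσ⟩ := isRegular_aleph_two.exists_aleph0_lt_cof_cofinally_lt
    (aleph_lt_aleph.2 one_lt_two) (g := fun γ => sSup (σ γ ∩ Iio om2))
    fun γ hγ => sSup_inter_Iio_om2_lt (hsub (hσΓ' γ hγ))
  obtain ⟨T, hT, hδT⟩ := hcof _ (pair_mem_skelΓ hδ.le)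
  have hτ : sSup (T ∩ Iio δ) < δ :=
    sSup_lt_of_countable ((hsub hT).1.mono inter_subset_left) hcofδ fun _ h => h.2
  obtain ⟨γ, hτγ, hγδ, hσγδ⟩ := hδσ _ hτ
  have hγ : γ < om2 := hγδ.trans hδ
  obtain ⟨ξ, hξ, hγξ⟩ := exists_lt_of_lt_csSup' (hσ γ hγ)
  have hσδ : ∀ s ∈ σ γ, s < om2 → s < δ :=
    fun s hs hs₂ => (le_csSup hbdd ⟨hs, hs₂⟩).trans_lt hσγδ
  refine ⟨σ γ, hσΓ' γ hγ, T, hT, ξ, hξ.2.le, fS_fS_ne hξ.1 (hδT (mem_insert _ _))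
    (hsub (hσΓ' γ hγ)).2.1 (hσδ ξ hξ.1 hξ.2) hδ ?_ hσδ⟩
  exact fun t ht htδ => ((le_csSup hbdd ⟨ht, htδ⟩).trans_lt hτγ).trans hγξ

/-- the projections `Q_S` on `ℓ₁(ω₂+1)` do not commute on any cofinal
subfamily of `Γ`: for every cofinal `Γ' ⊆ Γ` there are `S, T ∈ Γ'` with
`Q_S ∘ Q_T ≠ Q_T ∘ Q_S`; consequently there exist `S, T ∈ Γ` and `ξ ≤ ω₂` with
`f_S (f_T ξ) ≠ f_T (f_S ξ)`. -/
theorem statement16 (Q : Set Ordinal → (ellOne →L[ℝ] ellOne))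
    (hQ : ∀ S ∈ skelΓ, ∀ (x : ellOne) (β : OmTwoPlusOne),
      Q S x β = ∑' ξ : {ξ : OmTwoPlusOne // fS S ξ.val = β.val}, x ξ) :
    (∀ Γ' ⊆ skelΓ, (∀ S ∈ skelΓ, ∃ T ∈ Γ', S ⊆ T) →
      ∃ S ∈ Γ', ∃ T ∈ Γ', (Q S).comp (Q T) ≠ (Q T).comp (Q S)) ∧
    ∃ S ∈ skelΓ, ∃ T ∈ skelΓ, ∃ ξ ≤ om2, fS S (fS T ξ) ≠ fS T (fS S ξ) := by
  refine ⟨fun Γ' hsub hcof => ?_,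
    exists_fS_fS_ne_of_cofinal subset_rfl fun S hS => ⟨S, hS, subset_rfl⟩⟩
  obtain ⟨S, hS, T, hT, ξ, hξ, hne⟩ := exists_fS_fS_ne_of_cofinal hsub hcof
  exact ⟨S, hS, T, hT, comp_ne_of_fS_fS_ne hQ (hsub hS) (hsub hT) hξ hne⟩

end
end

section
/- Let A be a countable closed subset of ω₂ (with the order/interval topology) such that 0 ∈ A and every isolated point of A is isolated in ω₂ (i.e. is 0 or a successor ordinal). Define r_A : ω₂+1 → ω₂+1 by r_A(α) = max(A ∩ [0, α]) for α < ω₂ and r_A(ω₂) = max A. Then r_A is a continuous retraction of ω₂+1 onto A, i.e. r_A is continuous, r_A ∘ r_A = r_A, and its image is A. -/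
noncomputable section

/-- let `A ⊆ ω₂` be countable, closed in `ω₂` (i.e. closed under
suprema of its nonempty subsets that are `< ω₂`), with `0 ∈ A` and such that every
isolated point of `A` is isolated in `ω₂` (`0` or a successor).  Then the map
`r_A(α) = max (A ∩ [0, α])` for `α < ω₂`, `r_A(ω₂) = max A`, is a continuous
retraction of `ω₂ + 1` with image `A`. -/
theorem statement17 (A : Set Ordinal)
    (h0 : (0 : Ordinal) ∈ A) (hlt : ∀ a ∈ A, a < om2) (hcount : A.Countable)
    (hclosed : ∀ s : Set Ordinal, s ⊆ A → s.Nonempty → sSup s < om2 → sSup s ∈ A)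
    (hiso : ∀ a ∈ A, (∃ b < a, ∀ c ∈ A, ¬(b < c ∧ c < a)) →
      a = 0 ∨ ∃ b : Ordinal, a = Order.succ b)
    (r : OmTwoPlusOne → OmTwoPlusOne)
    (hr₁ : ∀ α : OmTwoPlusOne, α.val < om2 → (r α).val = sSup (A ∩ Set.Iic α.val))
    (hr₂ : ∀ α : OmTwoPlusOne, α.val = om2 → (r α).val = sSup A) :
    Continuous r ∧ r ∘ r = r ∧ Set.range r = {x : OmTwoPlusOne | x.val ∈ A} := by
  classical
  have hAne : A.Nonempty := ⟨0, h0⟩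
  -- `sSup A < ω₂` because `A` is countable and `ω₂` is regular.
  have hsupA : sSup A < om2 := by
    obtain ⟨f, hf⟩ := hcount.exists_eq_range hAne
    have hcof : Cardinal.aleph0 < om2.cof := by
      have hreg : Cardinal.IsRegular (Cardinal.aleph 2) :=
        Ordinal.succ_one ▸ Cardinal.isRegular_aleph_succ 1
      rw [show om2.cof = Cardinal.aleph 2 from hreg.cof_eq]
      rw [← Cardinal.aleph_zero]
      exact Cardinal.aleph_lt_aleph.mpr (by norm_num)
    have : (⨆ n, f n) < om2 := by
      apply Ordinal.iSup_lt_ord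
      · rwa [Cardinal.mk_nat]
      · intro n
        exact hlt (f n) (hf ▸ Set.mem_range_self n)
    rwa [hf, ← iSup]
  have hbddA : BddAbove A := ⟨om2, fun a ha => (hlt a ha).le⟩
  have hbdd : ∀ t : Ordinal, BddAbove (A ∩ Set.Iic t) :=
    fun t => BddAbove.mono Set.inter_subset_right bddAbove_Iic
  have hne : ∀ t : Ordinal, (A ∩ Set.Iic t).Nonempty :=
    fun t => ⟨0, h0, zero_le (a := t)⟩
  have hfix : ∀ a ∈ A, sSup (A ∩ Set.Iic a) = a := fun a ha =>
    le_antisymm (csSup_le (hne a) fun b hb => hb.2) (le_csSup (hbdd a) ⟨ha, Set.mem_Iic.mpr le_rfl⟩)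
  -- value of r is in A
  have hgA : ∀ x : OmTwoPlusOne, (r x).val ∈ A := by
    intro x
    by_cases hx : x.val < om2
    · rw [hr₁ x hx]
      exact hclosed _ Set.inter_subset_left (hne _)
        (lt_of_le_of_lt (csSup_le (hne _) fun b hb => hb.2) hx)
    · rw [hr₂ x (le_antisymm x.2 (not_lt.mp hx))]
      exact hclosed A (Set.Subset.refl A) hAne hsupA
  -- r is dominated by the identity (not needed below but cheap)
  -- fixed points of r
  have hrfix : ∀ x : OmTwoPlusOne, x.val ∈ A → (r x).val = x.val := by
    intro x hx
    rw [hr₁ x (hlt _ hx)]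
    exact hfix _ hx
  -- monotonicity
  have hmono : ∀ x y : OmTwoPlusOne, x ≤ y → (r x).val ≤ (r y).val := by
    intro x y hxy
    have hxy' : x.val ≤ y.val := hxy
    by_cases hy : y.val < om2
    · rw [hr₁ x (lt_of_le_of_lt hxy' hy), hr₁ y hy]
      exact csSup_le_csSup (hbdd _) (hne _)
        (Set.inter_subset_inter_right _ (Set.Iic_subset_Iic.mpr hxy'))
    · rw [hr₂ y (le_antisymm y.2 (not_lt.mp hy))]
      by_cases hx : x.val < om2
      · rw [hr₁ x hx]
        exact csSup_le_csSup hbddA (hne _) Set.inter_subset_left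
      · rw [hr₂ x (le_antisymm x.2 (not_lt.mp hx))]
  -- continuity
  have hcont : Continuous r := by
    rw [Topology.IsInducing.subtypeVal.continuous_iff]
    show Continuous fun x : OmTwoPlusOne => (r x).val
    rw [OrderTopology.topology_eq_generate_intervals (α := Ordinal.{0}),
      continuous_generateFrom_iff]
    rintro s ⟨b, rfl | rfl⟩
    · -- preimage of `Ioi b`
      set S : Set OmTwoPlusOne := (fun x : OmTwoPlusOne => (r x).val) ⁻¹' Set.Ioi b with hS
      by_cases hSne : S.Nonempty
      · have hvne : (Subtype.val '' S).Nonempty := hSne.image _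
        obtain ⟨x₀, hx₀S, hx₀v⟩ := csInf_mem hvne
        have hmin : ∀ x ∈ S, x₀.val ≤ x.val := by
          intro x hx
          rw [hx₀v]
          exact csInf_le (OrderBot.bddBelow _) (Set.mem_image_of_mem _ hx)
        -- find an element of A above b and below x₀
        obtain ⟨a, ⟨haA, hax⟩, hba⟩ :
            ∃ a, (a ∈ A ∧ a ≤ x₀.val) ∧ b < a := by
          by_cases hx₀ : x₀.val < om2
          · have := hx₀S
            rw [Set.mem_preimage, Set.mem_Ioi, hr₁ x₀ hx₀] at this
            obtain ⟨a, ⟨h1, h2⟩, h3⟩ := exists_lt_of_lt_csSup (hne _) this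
            exact ⟨a, ⟨h1, h2⟩, h3⟩
          · have hx₀e : x₀.val = om2 := le_antisymm x₀.2 (not_lt.mp hx₀)
            have := hx₀S
            rw [Set.mem_preimage, Set.mem_Ioi, hr₂ x₀ hx₀e] at this
            obtain ⟨a, h1, h3⟩ := exists_lt_of_lt_csSup hAne this
            exact ⟨a, ⟨h1, (hlt a h1).le.trans_eq hx₀e.symm⟩, h3⟩
        have haS : (⟨a, (hlt a haA).le⟩ : OmTwoPlusOne) ∈ S := by
          show b < (r ⟨a, (hlt a haA).le⟩).val
          rw [hrfix ⟨a, (hlt a haA).le⟩ haA]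
          exact hba
        have hx₀a : x₀.val = a := le_antisymm (hmin _ haS) hax
        have hx₀A : x₀.val ∈ A := hx₀a ▸ haA
        have hbx₀ : b < x₀.val := hx₀a ▸ hba
        -- x₀ is isolated from below in A
        have hiso' : x₀.val = 0 ∨ ∃ d : Ordinal, x₀.val = Order.succ d := by
          refine hiso x₀.val hx₀A ⟨b, hbx₀, ?_⟩
          rintro c hc ⟨h1, h2⟩
          have hcS : (⟨c, (hlt c hc).le⟩ : OmTwoPlusOne) ∈ S := by
            show b < (r ⟨c, (hlt c hc).le⟩).val
            rw [hrfix ⟨c, (hlt c hc).le⟩ hc]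
            exact h1
          exact absurd (hmin _ hcS) (not_le.mpr h2)
        have hSeq : S = Subtype.val ⁻¹' Set.Ici x₀.val := by
          ext x
          constructor
          · intro hx
            exact hmin x hx
          · intro hx
            have : (r x₀).val ≤ (r x).val := hmono x₀ x hx
            show b < (r x).val
            calc b < (r x₀).val := hx₀S
              _ ≤ (r x).val := this
        rw [hSeq]
        have : IsOpen (Set.Ici x₀.val) := by
          rcases hiso' with h | ⟨d, hd⟩
          · have : Set.Ici x₀.val = Set.univ := by
              rw [h]
              ext t
              simp [zero_le]
            rw [this]; exact isOpen_univ
          · rw [hd, Order.Ici_succ]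
            exact isOpen_Ioi
        exact this.preimage continuous_subtype_val
      · rw [Set.not_nonempty_iff_eq_empty] at hSne
        rw [hSne]; exact isOpen_empty
    · -- preimage of `Iio b`
      set T : Set OmTwoPlusOne := {x | b ≤ (r x).val} with hT
      by_cases hTne : T.Nonempty
      · have hvne : (Subtype.val '' T).Nonempty := hTne.image _
        obtain ⟨x₀, hx₀T, hx₀v⟩ := csInf_mem hvne
        have hmin : ∀ x ∈ T, x₀.val ≤ x.val := by
          intro x hx
          rw [hx₀v]
          exact csInf_le (OrderBot.bddBelow _) (Set.mem_image_of_mem _ hx)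
        have : (fun x : OmTwoPlusOne => (r x).val) ⁻¹' Set.Iio b
            = Subtype.val ⁻¹' Set.Iio x₀.val := by
          ext x
          simp only [Set.mem_preimage, Set.mem_Iio]
          constructor
          · intro hx
            by_contra h
            have hx₀x : x₀ ≤ x := not_lt.mp h
            have : b ≤ (r x).val := le_trans hx₀T (hmono x₀ x hx₀x)
            exact absurd hx (not_lt.mpr this)
          · intro hx
            by_contra h
            have : x ∈ T := not_lt.mp h
            exact absurd hx (not_lt.mpr (hmin x this))
        rw [this]
        exact isOpen_Iio.preimage continuous_subtype_val
      · have : (fun x : OmTwoPlusOne => (r x).val) ⁻¹' Set.Iio b = Set.univ := by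
          rw [Set.eq_univ_iff_forall]
          intro x
          by_contra h
          exact hTne ⟨x, show b ≤ (r x).val from not_lt.mp h⟩
        rw [this]; exact isOpen_univ
  refine ⟨hcont, ?_, ?_⟩
  · funext x
    exact Subtype.ext (hrfix (r x) (hgA x))
  · ext x
    constructor
    · rintro ⟨y, rfl⟩
      exact hgA y
    · intro hx
      exact ⟨x, Subtype.ext (hrfix x hx)⟩

end
end
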